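/- A (d-1)-dimensional simplicial complex K is sequentially (S_r) over a field k if and only if for all 0 ≤ m ≤ d - 1, all faces σ of K^⟨m⟩, and all j < min{m - dim σ - 1, r - 1}, one has H̃_j(link(σ; K^⟨m⟩); k) = 0. -/

import Mathlib

noncomputable section

/-! ## Singular homology machinery -/

namespace SimplexCategory

/-- The old Mathlib `SimplexCategory.toTopObj` (removed upstream), restored verbatim in meaning. -/
def toTopObj (x : SimplexCategory) : Set (Fin (x.len + 1) → NNReal) :=
  { f | ∑ i, f i = 1 }

/-- The old Mathlib `SimplexCategory.toTopMap` (removed upstream). -/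
def toTopMap {x y : SimplexCategory} (f : x ⟶ y) (g : x.toTopObj) : y.toTopObj :=
  ⟨fun i => ∑ j ∈ Finset.univ.filter (f.toOrderHom · = i), (g : Fin (x.len + 1) → NNReal) j, by
    change ∑ i, ∑ j ∈ Finset.univ.filter (f.toOrderHom · = i), (g : Fin (x.len + 1) → NNReal) j = 1
    rw [Finset.sum_fiberwise]
    exact g.2⟩

theorem continuous_toTopMap {x y : SimplexCategory} (f : x ⟶ y) : Continuous (toTopMap f) := by
  refine Continuous.subtype_mk (continuous_pi fun i => ?_) _
  exact continuous_finset_sum _ (fun j _ => (continuous_apply _).comp continuous_subtype_val)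

end SimplexCategory

/-- The topological standard `n`-simplex. -/
abbrev TopSimplex (n : ℕ) : Type := (SimplexCategory.mk n).toTopObj

/-- The `i`-th face inclusion of topological simplices, as a continuous map. -/
def faceIncl {n : ℕ} (i : Fin (n + 2)) : C(TopSimplex n, TopSimplex (n + 1)) :=
  ⟨SimplexCategory.toTopMap (SimplexCategory.δ i), SimplexCategory.continuous_toTopMap _⟩

/-- Singular `n`-chains of `X` with coefficients in `k`:
the free `k`-module on continuous maps from the standard `n`-simplex. -/
abbrev SChain (k : Type) [Field k] (X : Type*) [TopologicalSpace X] (n : ℕ) :=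
  C(TopSimplex n, X) →₀ k

variable (k : Type) [Field k]

/-- The singular boundary map `C_{n+1}(X) → C_n(X)`. -/
def sBoundary (X : Type*) [TopologicalSpace X] (n : ℕ) :
    SChain k X (n + 1) →ₗ[k] SChain k X n :=
  Finsupp.lsum k fun σ => ∑ i : Fin (n + 2),
    ((-1 : k) ^ (i : ℕ)) • Finsupp.lsingle (σ.comp (faceIncl i))

/-- The chain map induced by a continuous map. -/
def chainMap {A X : Type*} [TopologicalSpace A] [TopologicalSpace X] (f : C(A, X)) (n : ℕ) :
    SChain k A n →ₗ[k] SChain k X n :=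
  Finsupp.lmapDomain k k fun σ => f.comp σ

lemma chainMap_comm {A X : Type*} [TopologicalSpace A] [TopologicalSpace X] (f : C(A, X))
    (n : ℕ) :
    (sBoundary k X n).comp (chainMap k f (n + 1)) = (chainMap k f n).comp (sBoundary k A n) := by
  apply Finsupp.lhom_ext
  intro σ b
  simp only [LinearMap.coe_comp, Function.comp_apply, chainMap, Finsupp.lmapDomain_apply,
    Finsupp.mapDomain_single, sBoundary, Finsupp.lsum_single, LinearMap.coe_sum,
    Finset.sum_apply, LinearMap.smul_apply, Finsupp.lsingle_apply, map_sum,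
    Finsupp.mapDomain_smul, ContinuousMap.comp_assoc]

/-- Chains of `X` supported on a subspace `A ⊆ X`
(the image of the chains of `A` under the inclusion). -/
def subChains (X : Type*) [TopologicalSpace X] (A : Set X) (n : ℕ) :
    Submodule k (SChain k X n) :=
  LinearMap.range (chainMap k ⟨(Subtype.val : A → X), continuous_subtype_val⟩ n)

/-- Relative singular `n`-chains of the pair `(X, A)`. -/
abbrev RelChain (X : Type*) [TopologicalSpace X] (A : Set X) (n : ℕ) :=
  SChain k X n ⧸ subChains k X A n

lemma subChains_le (X : Type*) [TopologicalSpace X] (A : Set X) (n : ℕ) :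
    subChains k X A (n + 1) ≤ (subChains k X A n).comap (sBoundary k X n) := by
  rintro x ⟨y, rfl⟩
  exact ⟨sBoundary k A n y, (LinearMap.congr_fun (chainMap_comm k _ n) y).symm⟩

/-- The boundary map on relative singular chains. -/
def relBoundary (X : Type*) [TopologicalSpace X] (A : Set X) (n : ℕ) :
    RelChain k X A (n + 1) →ₗ[k] RelChain k X A n :=
  Submodule.mapQ _ _ (sBoundary k X n) (subChains_le k X A n)

/-- Relative singular cycles. -/
def relCycles (X : Type*) [TopologicalSpace X] (A : Set X) :
    (n : ℕ) → Submodule k (RelChain k X A n)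
  | 0 => ⊤
  | n + 1 => LinearMap.ker (relBoundary k X A n)

/-- Relative singular homology `H_n(X, A; k)`: cycles modulo boundaries. -/
def RelHomology (X : Type*) [TopologicalSpace X] (A : Set X) (n : ℕ) : Type _ :=
  ↥((relCycles k X A n).map (LinearMap.range (relBoundary k X A n)).mkQ)

/-- Local homology `H_n(X, X - p; k)`. -/
def LocalHomology (X : Type*) [TopologicalSpace X] (p : X) (n : ℕ) : Type _ :=
  RelHomology k X ({p}ᶜ) n

/-- Local homology with integer index (trivial in negative degrees). -/
def LocalHomologyZ (X : Type*) [TopologicalSpace X] (p : X) : ℤ → Type _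
  | .ofNat n => LocalHomology k X p n
  | .negSucc _ => PUnit

instance (X : Type*) [TopologicalSpace X] (p : X) (n : ℕ) :
    AddCommGroup (LocalHomology k X p n) := by
  unfold LocalHomology RelHomology; infer_instance

instance (X : Type*) [TopologicalSpace X] (p : X) (n : ℕ) :
    Module k (LocalHomology k X p n) := by
  unfold LocalHomology RelHomology; infer_instance

instance (X : Type*) [TopologicalSpace X] (p : X) (j : ℤ) :
    AddCommGroup (LocalHomologyZ k X p j) := by
  unfold LocalHomologyZ; cases j <;> infer_instance

instance (X : Type*) [TopologicalSpace X] (p : X) (j : ℤ) :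
    Module k (LocalHomologyZ k X p j) := by
  unfold LocalHomologyZ; cases j <;> infer_instance

/-- The augmentation map on singular `0`-chains. -/
def sAugment (X : Type*) [TopologicalSpace X] : SChain k X 0 →ₗ[k] k :=
  Finsupp.lsum k fun _ => LinearMap.id

/-- Reduced singular cycles (using the augmented chain complex). -/
def redCycles (X : Type*) [TopologicalSpace X] : (n : ℕ) → Submodule k (SChain k X n)
  | 0 => LinearMap.ker (sAugment k X)
  | n + 1 => LinearMap.ker (sBoundary k X n)

/-- Reduced singular homology `H̃_n(X; k)`. -/
def RedHomology (X : Type*) [TopologicalSpace X] (n : ℕ) : Type _ :=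
  ↥((redCycles k X n).map (LinearMap.range (sBoundary k X n)).mkQ)

/-! ## Abstract simplicial complexes and their geometric realization -/

/-- A (possibly empty) abstract simplicial complex on the vertex set `V`,
whose faces include the empty set whenever there is any face. -/
structure ASC (V : Type) where
  faces : Set (Finset V)
  down_closed : ∀ {s t : Finset V}, s ∈ faces → t ⊆ s → t ∈ faces

/-- The dimension of a face: its cardinality minus one. -/
def dimF {V : Type} (s : Finset V) : ℤ := (s.card : ℤ) - 1

namespace ASC

variable {V : Type}

/-- The link of a face `σ`. -/
def link [DecidableEq V] (K : ASC V) (σ : Finset V) : ASC V where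
  faces := {τ | τ ∩ σ = ∅ ∧ τ ∪ σ ∈ K.faces}
  down_closed := by
    rintro s t ⟨hd, hu⟩ hts
    refine ⟨Finset.subset_empty.mp ?_, K.down_closed hu (Finset.union_subset_union hts Finset.Subset.rfl)⟩
    rw [← hd]
    exact Finset.inter_subset_inter hts Finset.Subset.rfl

/-- A facet: an inclusion-maximal face. -/
def IsFacet (K : ASC V) (s : Finset V) : Prop :=
  s ∈ K.faces ∧ ∀ t ∈ K.faces, s ⊆ t → s = t

/-- The subcomplex of `K` generated by a given family of faces of `K`. -/
def gen (K : ASC V) (F : Set (Finset V)) : ASC V where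
  faces := {t | ∃ s ∈ F ∩ K.faces, t ⊆ s}
  down_closed := by rintro s t ⟨u, hu, hsu⟩ hts; exact ⟨u, hu, hts.trans hsu⟩

/-- `K^⟨m⟩`: the subcomplex generated by all facets of dimension at least `m`. -/
def aboveSkel (K : ASC V) (m : ℤ) : ASC V :=
  K.gen {s | K.IsFacet s ∧ m ≤ dimF s}

/-- `K^[m]`: the pure `m`-skeleton, generated by all `m`-dimensional faces. -/
def pureSkel (K : ASC V) (m : ℤ) : ASC V :=
  K.gen {s | dimF s = m}

/-- The `m`-skeleton: all faces of dimension at most `m`. -/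
def skel (K : ASC V) (m : ℤ) : ASC V where
  faces := {s | s ∈ K.faces ∧ dimF s ≤ m}
  down_closed := by
    rintro s t ⟨hs, hds⟩ hts
    refine ⟨K.down_closed hs hts, le_trans ?_ hds⟩
    simp only [dimF, sub_le_sub_iff_right, Nat.cast_le]
    exact Finset.card_le_card hts

/-- `K` has dimension `n`. -/
def hasDim (K : ASC V) (n : ℤ) : Prop :=
  (∃ s ∈ K.faces, dimF s = n) ∧ ∀ s ∈ K.faces, dimF s ≤ n

/-- The geometric realization of `K`, as a subset of `V → ℝ`. -/
def realizSet (K : ASC V) [Fintype V] : Set (V → ℝ) :=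
  {f | (∀ v, 0 ≤ f v) ∧ (∑ v, f v) = 1 ∧ ∃ s ∈ K.faces, ∀ v, f v ≠ 0 → v ∈ s}

/-- The geometric realization of `K`, as a topological space. -/
abbrev space (K : ASC V) [Fintype V] : Type _ := ↥(K.realizSet)

/-- The set of points of `|K|` lying in the realization of a subcomplex `L`. -/
def subSpace (K : ASC V) [Fintype V] (L : ASC V) : Set K.space :=
  {p | ∃ s ∈ L.faces, ∀ v, (p : V → ℝ) v ≠ 0 → v ∈ s}

/-- `p` lies in the (relative) interior of the face `σ`, i.e. the support of `p` is
exactly `σ`. -/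
def inInterior (K : ASC V) [Fintype V] (σ : Finset V) (p : K.space) : Prop :=
  ∀ v, (p : V → ℝ) v ≠ 0 ↔ v ∈ σ

end ASC

/-! ## Simplicial homology -/

/-- The `n`-dimensional faces of `K` (faces of cardinality `n+1`). -/
def FacesDim {V : Type} (K : ASC V) (n : ℕ) : Type _ :=
  {s : Finset V // s ∈ K.faces ∧ s.card = n + 1}

/-- Simplicial `n`-chains. -/
abbrev SimpChain {V : Type} (K : ASC V) (n : ℕ) : Type _ := FacesDim K n →₀ k

/-- The `i`-th vertex of a face of cardinality `n` (in the vertex order). -/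
def faceVertex {V : Type} [LinearOrder V] {n : ℕ} (s : Finset V) (hs : s.card = n)
    (i : Fin n) : V :=
  (s.sort (· ≤ ·))[(i : ℕ)]'(by rw [Finset.length_sort, hs]; exact i.isLt)

lemma faceVertex_mem {V : Type} [LinearOrder V] {n : ℕ} (s : Finset V) (hs : s.card = n)
    (i : Fin n) : faceVertex s hs i ∈ s :=
  (Finset.mem_sort _).mp (List.getElem_mem _)

/-- The simplicial boundary map. -/
def simpBoundary {V : Type} [LinearOrder V] (K : ASC V) (n : ℕ) :
    SimpChain k K (n + 1) →ₗ[k] SimpChain k K n :=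
  Finsupp.lsum k fun s => ∑ i : Fin (n + 2),
    ((-1 : k) ^ (i : ℕ)) • Finsupp.lsingle
      ⟨s.1.erase (faceVertex s.1 s.2.2 i),
        K.down_closed s.2.1 (Finset.erase_subset _ _), by
          rw [Finset.card_erase_of_mem (faceVertex_mem s.1 s.2.2 i), s.2.2]; omega⟩

/-- The simplicial augmentation map. -/
def simpAugment {V : Type} (K : ASC V) : SimpChain k K 0 →ₗ[k] k :=
  Finsupp.lsum k fun _ => LinearMap.id

/-- Reduced simplicial cycles (augmented chain complex). -/
def simpRedCycles {V : Type} [LinearOrder V] (K : ASC V) :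
    (n : ℕ) → Submodule k (SimpChain k K n)
  | 0 => (LinearMap.ker (simpAugment k K) : Submodule k (SimpChain k K 0))
  | n + 1 => LinearMap.ker (simpBoundary k K n)

/-- Reduced simplicial homology `H̃_n(K; k)` in degree `n : ℕ`. -/
def SimpRedHomology {V : Type} [LinearOrder V] (K : ASC V) (n : ℕ) : Type _ :=
  ↥((simpRedCycles k K n).map (LinearMap.range (simpBoundary k K n)).mkQ)

instance {V : Type} [LinearOrder V] (K : ASC V) (n : ℕ) :
    AddCommGroup (SimpRedHomology k K n) := by unfold SimpRedHomology; infer_instance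

instance {V : Type} [LinearOrder V] (K : ASC V) (n : ℕ) :
    Module k (SimpRedHomology k K n) := by unfold SimpRedHomology; infer_instance

/-- The cokernel of the simplicial augmentation: reduced homology in degree `-1`. -/
def augCoker {V : Type} (K : ASC V) : Type _ :=
  k ⧸ LinearMap.range (simpAugment k K)

instance {V : Type} (K : ASC V) : AddCommGroup (augCoker k K) := by
  unfold augCoker; infer_instance

instance {V : Type} (K : ASC V) : Module k (augCoker k K) := by
  unfold augCoker; infer_instance

/-- Reduced simplicial homology with integer index: in degree `-1` it is the cokernel of the
augmentation, and it is trivial in degrees below `-1`. -/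
def SimpRedHomologyZ {V : Type} [LinearOrder V] (K : ASC V) : ℤ → Type _
  | .ofNat n => SimpRedHomology k K n
  | .negSucc 0 => augCoker k K
  | .negSucc (_ + 1) => PUnit

instance {V : Type} [LinearOrder V] (K : ASC V) (j : ℤ) :
    AddCommGroup (SimpRedHomologyZ k K j) := by
  unfold SimpRedHomologyZ
  match j with
  | .ofNat n => infer_instance
  | .negSucc 0 => infer_instance
  | .negSucc (_ + 1) => infer_instance

instance {V : Type} [LinearOrder V] (K : ASC V) (j : ℤ) :
    Module k (SimpRedHomologyZ k K j) := by
  unfold SimpRedHomologyZ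
  match j with
  | .ofNat n => infer_instance
  | .negSucc 0 => infer_instance
  | .negSucc (_ + 1) => infer_instance

/-! ## Serre conditions -/

/-- Serre's condition `(S_r)` over `k` for a `(d-1)`-dimensional complex `K`. -/
def IsSerre {V : Type} [LinearOrder V] (K : ASC V) (d r : ℕ) : Prop :=
  ∀ σ ∈ K.faces, ∀ i : ℕ,
    (i : ℤ) < min ((r : ℤ) - 1) ((d : ℤ) - dimF σ - 2) →
      Subsingleton (SimpRedHomology k (K.link σ) i)

/-- Sequentially `(S_r)`: every pure `m`-skeleton (an `m`-dimensional complex) is `(S_r)`. -/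
def SeqSerre {V : Type} [LinearOrder V] (K : ASC V) (r : ℕ) : Prop :=
  ∀ m : ℕ, IsSerre k (K.pureSkel (m : ℤ)) (m + 1) r

/-! ## Topological notions -/

/-- The open unit ball in `ℝ^n`. -/
def openBall (n : ℕ) : Set (EuclideanSpace ℝ (Fin n)) := Metric.ball 0 1

/-- `p` has a neighborhood homeomorphic to an open `j`-dimensional ball. -/
def HasBallNbhd {X : Type*} [TopologicalSpace X] (p : X) (j : ℕ) : Prop :=
  ∃ U ∈ nhds p, Nonempty (↥U ≃ₜ ↥(openBall j))

/-- `D_j(X; k)`: the points with nonvanishing `j`-th local homology. -/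
def Dset (X : Type*) [TopologicalSpace X] (j : ℕ) : Set X :=
  {p | Nontrivial (LocalHomology k X p j)}

/-- `X^⟨m⟩`: the closure of the union of the `D_j(X; k)` for `j ≥ m`. -/
def aboveSet (X : Type*) [TopologicalSpace X] (m : ℕ) : Set X :=
  closure (⋃ j : ℕ, ⋃ _ : m ≤ j, Dset k X j)

/-- The dimension of a subset `S` of a space is at most `ℓ`: `S` contains no open ball of
dimension greater than `ℓ`.  (The empty set has negative dimension.) -/
def SetDimLE {X : Type*} [TopologicalSpace X] (S : Set X) (ℓ : ℤ) : Prop :=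
  ∀ n : ℕ, (∃ B : Set X, B ⊆ S ∧ Nonempty (↥B ≃ₜ ↥(openBall n))) → (n : ℤ) ≤ ℓ

/-!
The reduced homology `H̃_j` of a complex depends only on its faces of dimension `≤ j + 1`, the only
ones entering the augmented chain complex up to degree `j + 1`. In a complex of bounded dimension
every face lies in a facet, so a face of dimension `≤ m` lies in `K^[m]` iff it lies in `K^⟨m⟩`:
an `m`-face sits in a facet, of dimension `≥ m`, and a facet of dimension `≥ m` contains an
`m`-face through each of its faces of dimension `≤ m`. Hence `K^[m]` and `K^⟨m⟩` have the same
`m`-skeleton, their links at `σ` the same `(m - |σ|)`-skeleton, and the two vanishing conditions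
agree in the range `j < m - dim σ - 1`. For `m > d - 1` both are vacuous.
-/

namespace ASC

variable {V : Type}

lemma mem_skel_faces {K : ASC V} {m : ℤ} {s : Finset V} :
    s ∈ (K.skel m).faces ↔ s ∈ K.faces ∧ dimF s ≤ m :=
  Iff.rfl

lemma mem_faces_iff_of_skel_faces_eq {K₁ K₂ : ASC V} {m : ℤ}
    (h : (K₁.skel m).faces = (K₂.skel m).faces) {s : Finset V} (hs : dimF s ≤ m) :
    s ∈ K₁.faces ↔ s ∈ K₂.faces := by
  simpa only [mem_skel_faces, hs, and_true] using Set.ext_iff.mp h s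

lemma exists_isFacet_superset {K : ASC V} {n : ℤ} (hK : ∀ s ∈ K.faces, dimF s ≤ n)
    {s : Finset V} (hs : s ∈ K.faces) : ∃ F, K.IsFacet F ∧ s ⊆ F := by
  obtain ⟨F, ⟨hF, hsF⟩, hmin⟩ := (measure fun t : Finset V => (n - dimF t).toNat).wf.has_min
    {t | t ∈ K.faces ∧ s ⊆ t} ⟨s, hs, subset_rfl⟩
  refine ⟨F, ⟨hF, fun t ht hFt => ?_⟩, hsF⟩
  by_contra hne
  have hlt : F.card < t.card := Finset.card_lt_card (hFt.ssubset_of_ne hne)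
  have := hK t ht
  refine hmin t ⟨ht, hsF.trans hFt⟩ ?_
  change (n - dimF t).toNat < (n - dimF F).toNat
  simp only [dimF] at this ⊢
  omega

lemma aboveSkel_faces_eq_empty {K : ASC V} {n m : ℤ} (hK : ∀ s ∈ K.faces, dimF s ≤ n)
    (hnm : n < m) : (K.aboveSkel m).faces = ∅ := by
  refine Set.eq_empty_of_forall_notMem ?_
  rintro s ⟨F, ⟨⟨hF, hmF⟩, -⟩, -⟩
  have := hK F hF.1
  omega

lemma skel_pureSkel_faces_eq_skel_aboveSkel_faces {K : ASC V} {n : ℤ}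
    (hK : ∀ s ∈ K.faces, dimF s ≤ n) (m : ℤ) :
    ((K.pureSkel m).skel m).faces = ((K.aboveSkel m).skel m).faces := by
  ext s
  simp only [mem_skel_faces, and_congr_left_iff]
  intro hsm
  constructor
  · rintro ⟨F, ⟨hFm : dimF F = m, hF⟩, hsF⟩
    obtain ⟨G, hG, hFG⟩ := exists_isFacet_superset hK hF
    have := Finset.card_le_card hFG
    refine ⟨G, ⟨⟨hG, ?_⟩, hG.1⟩, hsF.trans hFG⟩
    simp only [dimF] at hFm ⊢
    omega
  · rintro ⟨G, ⟨⟨-, hmG : m ≤ dimF G⟩, hG⟩, hsG⟩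
    simp only [dimF] at hsm hmG
    obtain ⟨F, hsF, hFG, hF⟩ :=
      Finset.exists_subsuperset_card_eq hsG (n := (m + 1).toNat) (by omega) (by omega)
    refine ⟨F, ⟨show dimF F = m by simp only [dimF]; omega, K.down_closed hG hFG⟩, hsF⟩

lemma skel_link_faces_eq [DecidableEq V] {K₁ K₂ : ASC V} {m : ℤ}
    (h : (K₁.skel m).faces = (K₂.skel m).faces) (σ : Finset V) :
    ((K₁.link σ).skel (m - σ.card)).faces = ((K₂.link σ).skel (m - σ.card)).faces := by
  ext τ
  simp only [mem_skel_faces, and_congr_left_iff]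
  intro hτm
  refine and_congr_right fun _ => ?_
  refine mem_faces_iff_of_skel_faces_eq h ?_
  have := Finset.card_union_le τ σ
  simp only [dimF] at hτm ⊢
  omega

end ASC

lemma LinearMap.map_ker_eq_ker_of_comp_eq {R M₁ M₂ N₁ N₂ : Type*} [Semiring R]
    [AddCommMonoid M₁] [AddCommMonoid M₂] [AddCommMonoid N₁] [AddCommMonoid N₂]
    [Module R M₁] [Module R M₂] [Module R N₁] [Module R N₂]
    (e : M₁ ≃ₗ[R] M₂) {f₁ : M₁ →ₗ[R] N₁} {f₂ : M₂ →ₗ[R] N₂} {g : N₁ →ₗ[R] N₂}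
    (hg : Function.Injective g) (hf : f₂ ∘ₗ e = g ∘ₗ f₁) :
    (LinearMap.ker f₁).map (e : M₁ →ₗ[R] M₂) = LinearMap.ker f₂ := by
  ext y
  have := LinearMap.congr_fun hf (e.symm y)
  simp only [LinearMap.coe_comp, LinearEquiv.coe_coe, Function.comp_apply,
    LinearEquiv.apply_symm_apply] at this
  rw [Submodule.mem_map_equiv, LinearMap.mem_ker, LinearMap.mem_ker, this, ← map_zero g,
    hg.eq_iff]

lemma subsingleton_simpRedHomology_iff {V : Type} [LinearOrder V] (K : ASC V) (n : ℕ) :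
    Subsingleton (SimpRedHomology k K n) ↔
      simpRedCycles k K n ≤ LinearMap.range (simpBoundary k K n) := by
  unfold SimpRedHomology
  rw [Submodule.subsingleton_iff_eq_bot, ← LinearMap.le_ker_iff_map, Submodule.ker_mkQ]

section SkeletonInvariance

variable {V : Type} {K₁ K₂ : ASC V} {m : ℤ} (h : (K₁.skel m).faces = (K₂.skel m).faces)

def facesDimEquivOfSkelFacesEq (q : ℕ) (hq : (q : ℤ) ≤ m) : FacesDim K₁ q ≃ FacesDim K₂ q :=
  Equiv.subtypeEquivRight fun s => and_congr_left fun hs =>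
    ASC.mem_faces_iff_of_skel_faces_eq h (by simp only [dimF, hs]; omega)

def simpChainEquivOfSkelFacesEq (q : ℕ) (hq : (q : ℤ) ≤ m) :
    SimpChain k K₁ q ≃ₗ[k] SimpChain k K₂ q :=
  Finsupp.domLCongr (facesDimEquivOfSkelFacesEq h q hq)

lemma simpAugment_comp_simpChainEquivOfSkelFacesEq (hm : 0 ≤ m) :
    simpAugment k K₂ ∘ₗ (simpChainEquivOfSkelFacesEq k h 0 hm) =
      LinearMap.id ∘ₗ simpAugment k K₁ := by
  apply Finsupp.lhom_ext
  intro s a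
  simp [simpChainEquivOfSkelFacesEq, simpAugment]

variable [LinearOrder V]

lemma simpBoundary_comp_simpChainEquivOfSkelFacesEq (q : ℕ) (hq : (q : ℤ) + 1 ≤ m) :
    simpBoundary k K₂ q ∘ₗ (simpChainEquivOfSkelFacesEq k h (q + 1) (by push_cast; exact hq)) =
      (simpChainEquivOfSkelFacesEq k h q (by omega)) ∘ₗ simpBoundary k K₁ q := by
  apply Finsupp.lhom_ext
  intro s a
  simp only [LinearMap.coe_comp, Function.comp_apply, LinearEquiv.coe_coe,
    simpChainEquivOfSkelFacesEq, Finsupp.domLCongr_single, simpBoundary, Finsupp.lsum_single,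
    LinearMap.coe_sum, Finset.sum_apply, LinearMap.smul_apply, map_sum, map_smul]
  refine Finset.sum_congr rfl fun i _ => congrArg _ ?_
  symm
  exact (Finsupp.domLCongr_single (R := k) (facesDimEquivOfSkelFacesEq h q (by omega)) _ a).trans
    rfl

lemma map_simpRedCycles_simpChainEquivOfSkelFacesEq (n : ℕ) (hn : (n : ℤ) + 1 ≤ m) :
    (simpRedCycles k K₁ n).map (simpChainEquivOfSkelFacesEq k h n (by omega)).toLinearMap =
      simpRedCycles k K₂ n := by
  cases n with
  | zero =>
    exact LinearMap.map_ker_eq_ker_of_comp_eq _ Function.injective_id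
      (simpAugment_comp_simpChainEquivOfSkelFacesEq k h (by omega))
  | succ n =>
    exact LinearMap.map_ker_eq_ker_of_comp_eq _ (LinearEquiv.injective _)
      (simpBoundary_comp_simpChainEquivOfSkelFacesEq k h n (by push_cast at hn; omega))

lemma map_range_simpBoundary_simpChainEquivOfSkelFacesEq (n : ℕ) (hn : (n : ℤ) + 1 ≤ m) :
    (LinearMap.range (simpBoundary k K₁ n)).map
        (simpChainEquivOfSkelFacesEq k h n (by omega)).toLinearMap =
      LinearMap.range (simpBoundary k K₂ n) := by
  rw [← LinearMap.range_comp, ← simpBoundary_comp_simpChainEquivOfSkelFacesEq k h n hn,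
    LinearMap.range_comp_of_range_eq_top _ (LinearEquiv.range _)]

end SkeletonInvariance

theorem subsingleton_simpRedHomology_iff_of_skel_faces_eq {V : Type} [LinearOrder V]
    {K₁ K₂ : ASC V} {m : ℤ} (h : (K₁.skel m).faces = (K₂.skel m).faces) (n : ℕ)
    (hn : (n : ℤ) + 1 ≤ m) :
    Subsingleton (SimpRedHomology k K₁ n) ↔ Subsingleton (SimpRedHomology k K₂ n) := by
  rw [subsingleton_simpRedHomology_iff, subsingleton_simpRedHomology_iff,
    ← map_simpRedCycles_simpChainEquivOfSkelFacesEq k h n hn,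
    ← map_range_simpBoundary_simpChainEquivOfSkelFacesEq k h n hn,
    Submodule.map_le_map_iff_of_injective (LinearEquiv.injective _)]

lemma isSerre_pureSkel_iff {V : Type} [LinearOrder V] {K : ASC V} {n : ℤ}
    (hK : ∀ s ∈ K.faces, dimF s ≤ n) (m r : ℕ) :
    IsSerre k (K.pureSkel (m : ℤ)) (m + 1) r ↔
      ∀ σ ∈ (K.aboveSkel (m : ℤ)).faces, ∀ j : ℕ,
        (j : ℤ) < min ((m : ℤ) - dimF σ - 1) ((r : ℤ) - 1) →
          Subsingleton (SimpRedHomology k ((K.aboveSkel (m : ℤ)).link σ) j) := by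
  have hskel := ASC.skel_pureSkel_faces_eq_skel_aboveSkel_faces hK (m : ℤ)
  have hagree : ∀ (σ : Finset V) (j : ℕ), (j : ℤ) < min ((m : ℤ) - dimF σ - 1) ((r : ℤ) - 1) →
      (σ ∈ (K.pureSkel m).faces ↔ σ ∈ (K.aboveSkel m).faces) ∧
      (Subsingleton (SimpRedHomology k ((K.pureSkel m).link σ) j) ↔
        Subsingleton (SimpRedHomology k ((K.aboveSkel m).link σ) j)) := fun σ j hj =>
    ⟨ASC.mem_faces_iff_of_skel_faces_eq hskel (by omega),
      subsingleton_simpRedHomology_iff_of_skel_faces_eq k (ASC.skel_link_faces_eq hskel σ) j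
        (by simp only [dimF] at hj; omega)⟩
  have hrange : ∀ (σ : Finset V) (j : ℕ),
      (j : ℤ) < min ((r : ℤ) - 1) (((m + 1 : ℕ) : ℤ) - dimF σ - 2) ↔
        (j : ℤ) < min ((m : ℤ) - dimF σ - 1) ((r : ℤ) - 1) := by
    intro σ j
    push_cast
    omega
  constructor
  · intro h σ hσ j hj
    obtain ⟨hmem, hH⟩ := hagree σ j hj
    exact hH.1 (h σ (hmem.2 hσ) j ((hrange σ j).2 hj))
  · intro h σ hσ j hj
    rw [hrange] at hj
    obtain ⟨hmem, hH⟩ := hagree σ j hj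
    exact hH.2 (h σ (hmem.1 hσ) j hj)

theorem serre_stmt_13 (k : Type) [Field k] (V : Type) [LinearOrder V] (K : ASC V)
    (d r : ℕ) (hd : K.hasDim ((d : ℤ) - 1)) :
    SeqSerre k K r ↔
      ∀ m : ℕ, (m : ℤ) ≤ (d : ℤ) - 1 → ∀ σ ∈ (K.aboveSkel (m : ℤ)).faces, ∀ j : ℕ,
        (j : ℤ) < min ((m : ℤ) - dimF σ - 1) ((r : ℤ) - 1) →
          Subsingleton (SimpRedHomology k ((K.aboveSkel (m : ℤ)).link σ) j) := by
  obtain ⟨-, hK⟩ := hd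
  unfold SeqSerre
  simp_rw [isSerre_pureSkel_iff k hK]
  refine forall_congr' fun m => ⟨fun h _ => h, fun h => ?_⟩
  by_cases hm : (m : ℤ) ≤ d - 1
  · exact h hm
  · simp [ASC.aboveSkel_faces_eq_empty hK (not_le.mp hm)]

end
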